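/- Fix m = 2n with n ≥ T ≥ 1 and w ∈ ℝ^T. Let z_i = e^{2πji/n} and define u_i = Re(w ⊙ φ(z_i)) and u_{n+i} = Im(w ⊙ φ(z_i)) for i = 0,...,n−1, where φ(z) = (1,z,...,z^{T−1}). Then ∑_{k=0}^{2n−1} Toep(u_k)ᵀ Toep(u_k) = (m/2) · diag(∑_{i=1}^T w_i², ∑_{i=1}^{T−1} w_i², ..., w_1²). -/
import Mathlib

open Matrix

/-- Lower-triangular Toeplitz matrix with first column `v`. -/
def ToepR {T : ℕ} (v : Fin T → ℝ) : Matrix (Fin T) (Fin T) ℝ :=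
  fun k ℓ => if (ℓ : ℕ) ≤ (k : ℕ) then
    v ⟨(k : ℕ) - (ℓ : ℕ), lt_of_le_of_lt (Nat.sub_le _ _) k.isLt⟩ else 0

lemma cos_sum_eq_zero (n : ℕ) (d : ℤ) (hd : d ≠ 0) (hlt : d.natAbs < n) :
    ∑ i ∈ Finset.range n, Real.cos (2 * Real.pi * i * d / n) = 0 := by
  have hn0 : 0 < n := lt_of_le_of_lt (Nat.zero_le _) hlt
  have hnR : (n:ℝ) ≠ 0 := Nat.cast_ne_zero.mpr hn0.ne'
  set θ : ℝ := 2 * Real.pi * d / n with hθ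
  set x : ℂ := Complex.exp (θ * Complex.I) with hx
  have hre : ∀ i : ℕ, Real.cos (2 * Real.pi * i * d / n) = (x ^ i).re := by
    intro i
    rw [hx, ← Complex.exp_nat_mul]
    have h1 : (i:ℂ) * (θ * Complex.I) = ((i * θ : ℝ) : ℂ) * Complex.I := by push_cast; ring
    rw [h1, Complex.exp_ofReal_mul_I_re]
    congr 1
    rw [hθ]; field_simp
  have hx1 : x ≠ 1 := by
    intro h
    rw [hx, Complex.exp_eq_one_iff] at h
    obtain ⟨m, hm⟩ := h
    have h2 : (θ:ℂ) = (m:ℂ) * (2 * Real.pi) :=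
      mul_right_cancel₀ Complex.I_ne_zero
        (by rw [hm]; ring : (θ:ℂ) * Complex.I = ((m:ℂ) * (2*Real.pi)) * Complex.I)
    have h3 : θ = (m:ℝ) * (2 * Real.pi) := by exact_mod_cast h2
    have h4 : (d:ℝ) = (m:ℝ) * n := by
      have h5 : 2 * Real.pi * d / n = (m:ℝ) * (2 * Real.pi) := h3
      field_simp at h5
      nlinarith [Real.pi_pos]
    have h5 : d = m * n := by exact_mod_cast h4
    rcases eq_or_ne m 0 with rfl | hm0
    · simp at h5; exact hd h5
    · have h6 : 1 ≤ m.natAbs := Int.natAbs_pos.mpr hm0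
      have h7 : d.natAbs = m.natAbs * n := by
        rw [h5, Int.natAbs_mul, Int.natAbs_natCast]
      have : n ≤ d.natAbs := by
        rw [h7]; nlinarith
      omega
  have hxn : x ^ n = 1 := by
    rw [hx, ← Complex.exp_nat_mul]
    have h8 : (n:ℂ) * (θ * Complex.I) = (d:ℂ) * (2 * Real.pi * Complex.I) := by
      have hnC : (n:ℂ) ≠ 0 := Nat.cast_ne_zero.mpr hn0.ne'
      rw [hθ]; push_cast; field_simp
    rw [h8]
    exact Complex.exp_int_mul_two_pi_mul_I d
  calc ∑ i ∈ Finset.range n, Real.cos (2 * Real.pi * i * d / n)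
      = (∑ i ∈ Finset.range n, x ^ i).re := by
        rw [Complex.re_sum]; exact Finset.sum_congr rfl fun i _ => hre i
    _ = 0 := by rw [geom_sum_eq hx1, hxn]; simp

lemma ToepR_entry {T : ℕ} (u : Fin T → ℝ) (k ℓ : Fin T) :
    ((ToepR u).transpose * ToepR u) k ℓ =
      ∑ j : Fin T, (if (k:ℕ) ≤ (j:ℕ) ∧ (ℓ:ℕ) ≤ (j:ℕ) then
        u ⟨(j:ℕ) - (k:ℕ), lt_of_le_of_lt (Nat.sub_le _ _) j.isLt⟩ *
        u ⟨(j:ℕ) - (ℓ:ℕ), lt_of_le_of_lt (Nat.sub_le _ _) j.isLt⟩ else 0) := by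
  rw [Matrix.mul_apply]
  refine Finset.sum_congr rfl fun j _ => ?_
  rw [Matrix.transpose_apply]
  simp only [ToepR]
  rw [ite_zero_mul_ite_zero]

theorem real_sinusoid_toeplitz_covariance (T n : ℕ) (hT : 1 ≤ T) (hn : T ≤ n) (w : Fin T → ℝ) :
    (∑ i ∈ Finset.range n,
        (ToepR (fun k => w k * Real.cos (2 * Real.pi * i * k / n))).transpose
          * ToepR (fun k => w k * Real.cos (2 * Real.pi * i * k / n))) +
      (∑ i ∈ Finset.range n,
        (ToepR (fun k => w k * Real.sin (2 * Real.pi * i * k / n))).transpose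
          * ToepR (fun k => w k * Real.sin (2 * Real.pi * i * k / n))) =
      (n : ℝ) • Matrix.diagonal
        (fun k : Fin T => ∑ i : Fin (T - (k : ℕ)), w ⟨(i : ℕ), by have := i.isLt; omega⟩ ^ 2) := by
  ext k ℓ
  rw [Matrix.add_apply, Matrix.sum_apply, Matrix.sum_apply]
  simp only [ToepR_entry]
  rw [← Finset.sum_add_distrib]
  refine Eq.trans (Finset.sum_congr rfl fun i _ => Finset.sum_add_distrib.symm) ?_
  rw [Finset.sum_comm]
  trans (∑ j : Fin T, (if k = ℓ ∧ (k:ℕ) ≤ (j:ℕ) then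
          (n:ℝ) * w ⟨(j:ℕ) - (k:ℕ), lt_of_le_of_lt (Nat.sub_le _ _) j.isLt⟩ ^ 2 else 0))
  · refine Finset.sum_congr rfl fun j _ => ?_
    by_cases hc : (k:ℕ) ≤ (j:ℕ) ∧ (ℓ:ℕ) ≤ (j:ℕ)
    · simp only [if_pos hc]
      obtain ⟨hk, hl⟩ := hc
      have hjk : ((((j:ℕ) - (k:ℕ)) : ℕ) : ℝ) = ((j:ℕ):ℝ) - ((k:ℕ):ℝ) := by
        push_cast [Nat.cast_sub hk]; ring
      have hjl : ((((j:ℕ) - (ℓ:ℕ)) : ℕ) : ℝ) = ((j:ℕ):ℝ) - ((ℓ:ℕ):ℝ) := by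
        push_cast [Nat.cast_sub hl]; ring
      by_cases heq : k = ℓ
      · subst heq
        rw [if_pos ⟨rfl, hk⟩]
        have hterm : ∀ i ∈ Finset.range n,
            w ⟨(j:ℕ) - (k:ℕ), lt_of_le_of_lt (Nat.sub_le _ _) j.isLt⟩ *
              Real.cos (2 * Real.pi * i * (((j:ℕ) - (k:ℕ) : ℕ)) / n) *
            (w ⟨(j:ℕ) - (k:ℕ), lt_of_le_of_lt (Nat.sub_le _ _) j.isLt⟩ *
              Real.cos (2 * Real.pi * i * (((j:ℕ) - (k:ℕ) : ℕ)) / n)) +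
            w ⟨(j:ℕ) - (k:ℕ), lt_of_le_of_lt (Nat.sub_le _ _) j.isLt⟩ *
              Real.sin (2 * Real.pi * i * (((j:ℕ) - (k:ℕ) : ℕ)) / n) *
            (w ⟨(j:ℕ) - (k:ℕ), lt_of_le_of_lt (Nat.sub_le _ _) j.isLt⟩ *
              Real.sin (2 * Real.pi * i * (((j:ℕ) - (k:ℕ) : ℕ)) / n)) =
            w ⟨(j:ℕ) - (k:ℕ), lt_of_le_of_lt (Nat.sub_le _ _) j.isLt⟩ ^ 2 := by
          intro i _
          have h := Real.sin_sq_add_cos_sq (2 * Real.pi * i * (((j:ℕ) - (k:ℕ) : ℕ)) / n)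
          nlinarith [h]
        rw [Finset.sum_congr rfl hterm, Finset.sum_const, Finset.card_range, nsmul_eq_mul]
      · rw [if_neg (fun h => heq h.1)]
        set d : ℤ := (ℓ:ℤ) - (k:ℤ) with hd
        have hd0 : d ≠ 0 := by
          simp only [hd, sub_ne_zero]
          exact_mod_cast fun h => heq (Fin.ext (by exact_mod_cast h)).symm
        have hdlt : d.natAbs < n := by
          have h1 := k.isLt; have h2 := ℓ.isLt
          simp only [hd]; omega
        calc (∑ i ∈ Finset.range n,
              (w ⟨(j:ℕ) - (k:ℕ), lt_of_le_of_lt (Nat.sub_le _ _) j.isLt⟩ *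
                Real.cos (2 * Real.pi * i * (((j:ℕ) - (k:ℕ) : ℕ)) / n) *
              (w ⟨(j:ℕ) - (ℓ:ℕ), lt_of_le_of_lt (Nat.sub_le _ _) j.isLt⟩ *
                Real.cos (2 * Real.pi * i * (((j:ℕ) - (ℓ:ℕ) : ℕ)) / n)) +
              w ⟨(j:ℕ) - (k:ℕ), lt_of_le_of_lt (Nat.sub_le _ _) j.isLt⟩ *
                Real.sin (2 * Real.pi * i * (((j:ℕ) - (k:ℕ) : ℕ)) / n) *
              (w ⟨(j:ℕ) - (ℓ:ℕ), lt_of_le_of_lt (Nat.sub_le _ _) j.isLt⟩ *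
                Real.sin (2 * Real.pi * i * (((j:ℕ) - (ℓ:ℕ) : ℕ)) / n))))
            = ∑ i ∈ Finset.range n,
              (w ⟨(j:ℕ) - (k:ℕ), lt_of_le_of_lt (Nat.sub_le _ _) j.isLt⟩ *
               w ⟨(j:ℕ) - (ℓ:ℕ), lt_of_le_of_lt (Nat.sub_le _ _) j.isLt⟩) *
               Real.cos (2 * Real.pi * i * (d:ℝ) / n) := by
              refine Finset.sum_congr rfl fun i _ => ?_
              have harg : 2 * Real.pi * i * (d:ℝ) / n =
                  2 * Real.pi * i * (((j:ℕ) - (k:ℕ) : ℕ)) / n -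
                  2 * Real.pi * i * (((j:ℕ) - (ℓ:ℕ) : ℕ)) / n := by
                rw [hjk, hjl, hd]; push_cast; ring
              rw [harg, Real.cos_sub]; ring
          _ = 0 := by rw [← Finset.mul_sum, cos_sum_eq_zero n d hd0 hdlt, mul_zero]
    · simp only [if_neg hc, add_zero, Finset.sum_const_zero]
      rw [if_neg (by rintro ⟨rfl, h⟩; exact hc ⟨h, h⟩)]
  · rw [Matrix.smul_apply]
    by_cases heq : k = ℓ
    · subst heq
      rw [Matrix.diagonal_apply_eq, smul_eq_mul, Finset.mul_sum]
      simp only [eq_self_iff_true, true_and]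
      rw [← Finset.sum_filter]
      refine Finset.sum_nbij' (i := fun j => (⟨(j:ℕ) - (k:ℕ), by have := j.isLt; have := k.isLt; omega⟩ : Fin (T - (k:ℕ))))
        (j := fun i => (⟨(i:ℕ) + (k:ℕ), by have := i.isLt; omega⟩ : Fin T)) ?_ ?_ ?_ ?_ ?_
      · intro a _; exact Finset.mem_univ _
      · intro a _
        simp only [Finset.mem_filter, Finset.mem_univ, true_and]
        exact Nat.le_add_left _ _
      · intro a ha
        simp only [Finset.mem_filter, Finset.mem_univ, true_and] at ha
        apply Fin.ext; simp; omega
      · intro a _; apply Fin.ext; simp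
      · intro a ha; rfl
    · rw [Matrix.diagonal_apply_ne _ heq, smul_zero]
      refine Finset.sum_eq_zero fun j _ => ?_
      rw [if_neg (fun h => heq h.1)]
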